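/- arXiv:2412.00914 — 2 statements merged into one kernel-verified Lean document; each statement's English description precedes it below -/
import Mathlib

section
/- For a perfectoid ring R₀, the inverse limit of the truncated Witt vector rings W_r(R₀) along the Witt vector Frobenius maps F : W_{r+1}(R₀) → W_r(R₀) is isomorphic to A_inf(R₀) := W(R₀^♭), the Witt vectors of the tilt of R₀. -/
/-- The inverse limit of the truncated Witt vector rings `W_r(R)` along a family of
transition maps `F r : W_{r+1}(R) → W_r(R)`, realized as a subring of the product. -/
noncomputable def wittFrobeniusLimit (p : ℕ) [Fact p.Prime] (R : Type*) [CommRing R]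
    (F : ∀ r : ℕ, TruncatedWittVector p (r + 1) R →+* TruncatedWittVector p r R) :
    Subring (∀ r : ℕ, TruncatedWittVector p r R) where
  carrier := {f | ∀ r, F r (f (r + 1)) = f r}
  mul_mem' := fun ha hb r => by simp [map_mul, ha r, hb r]
  one_mem' := fun r => by simp
  add_mem' := fun ha hb r => by rw [Pi.add_apply, Pi.add_apply, map_add, ha r, hb r]
  zero_mem' := fun r => by simp
  neg_mem' := fun ha r => by rw [Pi.neg_apply, Pi.neg_apply, map_neg, ha r]

/-!
The Witt vector Frobenius contracts coefficientwise congruences: its `n`-th coefficient is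
`x_n ^ p + p * P_n(x)` with `P_n` an integral polynomial without constant term, so if `π ∣ p`
and `x ≡ y` modulo `p π^k` coefficientwise, then `F x ≡ F y` modulo `p π^(k+1)`. The limit along
`F` is the set of fixed points of the shift `(Y_r)_r ↦ (F Y_(r+1))_r`, which is therefore a
contraction for the `π`-adic topology. Hence two fixed points that agree modulo `p` are equal, and
iterating the shift on any family that is fixed modulo `p` converges to a fixed point lifting it:
reduction modulo `p` identifies the limit for `R` with the limit for `R/p`. In characteristic `p`
the truncated Frobenius raises coefficients to the `p`-th power, so the `i`-th coefficients of a
point of the limit form a compatible system of `p`-th roots, i.e. an element of `(R/p)^♭`.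
-/

section Divisibility

variable {R : Type*} [CommRing R]

theorem mul_pow_succ_dvd_pow {a b c : R} {k n : ℕ} (hcb : c ∣ b) (hn : 2 ≤ n)
    (h : b * c ^ k ∣ a) : b * c ^ (k + 1) ∣ a ^ n := by
  obtain ⟨t, rfl⟩ := h
  obtain ⟨m, rfl⟩ := Nat.exists_eq_add_of_le' hn
  have hexpand :
      (b * c ^ k * t) ^ (m + 2) = b * (b ^ (m + 1) * c ^ (k * (m + 2))) * t ^ (m + 2) := by
    ring
  rw [hexpand, pow_succ' c k]
  exact (mul_dvd_mul_left b (mul_dvd_mul (dvd_pow hcb (by omega))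
    (pow_dvd_pow c (Nat.le_mul_of_pos_right k (by omega))))).mul_right _

theorem mul_pow_succ_dvd_mul {a b c : R} {k : ℕ} (hcb : c ∣ b) (h : b * c ^ k ∣ a) :
    b * c ^ (k + 1) ∣ b * a := by
  rw [pow_succ, ← mul_assoc, mul_comm b a]
  exact mul_dvd_mul h hcb

end Divisibility

section Adic

variable {R : Type*} [CommRing R] {π : R}

theorem smodEq_span_singleton_pow_iff {x y : R} {n : ℕ} :
    x ≡ y [SMOD (Ideal.span {π} ^ n • ⊤ : Submodule R R)] ↔ π ^ n ∣ x - y := by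
  rw [SModEq.sub_mem, smul_eq_mul, Ideal.mul_top, Ideal.span_singleton_pow,
    Ideal.mem_span_singleton]

theorem IsHausdorff.eq_of_forall_pow_dvd_sub (h : IsHausdorff (Ideal.span {π}) R) {x y : R}
    (hxy : ∀ n, π ^ n ∣ x - y) : x = y :=
  sub_eq_zero.1 <| h.haus _ fun n => smodEq_span_singleton_pow_iff.2 (by simpa using hxy n)

theorem IsPrecomplete.exists_pow_dvd_sub (h : IsPrecomplete (Ideal.span {π}) R) {f : ℕ → R}
    (hf : ∀ {m n}, m ≤ n → π ^ m ∣ f n - f m) : ∃ L, ∀ n, π ^ n ∣ L - f n := by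
  obtain ⟨L, hL⟩ := h.prec fun hmn => smodEq_span_singleton_pow_iff.2 (dvd_sub_comm.1 (hf hmn))
  exact ⟨L, fun n => dvd_sub_comm.1 (smodEq_span_singleton_pow_iff.1 (hL n))⟩

theorem IsAdicComplete.exists_mul_pow_dvd_sub (h : IsAdicComplete (Ideal.span {π}) R) (a : R)
    {s : ℕ → R} (hs : ∀ k, a * π ^ k ∣ s (k + 1) - s k) : ∃ L, ∀ k, a * π ^ k ∣ L - s k := by
  choose e he using hs
  -- `s k = s 0 + a * σ k`, and `σ` converges `π`-adically
  let σ : ℕ → R := fun k => ∑ j ∈ Finset.range k, π ^ j * e j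
  have hσ : ∀ {m n}, m ≤ n → π ^ m ∣ σ n - σ m := fun hmn => by
    rw [← Finset.sum_Ico_eq_sub _ hmn]
    exact Finset.dvd_sum fun j hj => (pow_dvd_pow π (Finset.mem_Ico.1 hj).1).mul_right _
  obtain ⟨E, hE⟩ := h.toIsPrecomplete.exists_pow_dvd_sub hσ
  have htelescope : ∀ k, s k - s 0 = a * σ k := fun k => by
    rw [← Finset.sum_range_sub, Finset.mul_sum]
    exact Finset.sum_congr rfl fun j _ => by rw [he j]; ring
  refine ⟨s 0 + a * E, fun k => ?_⟩
  rw [show s 0 + a * E - s k = a * (E - σ k) by linear_combination -htelescope k]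
  exact mul_dvd_mul_left a (hE k)

end Adic

theorem MvPolynomial.aeval_mem_of_constantCoeff_eq_zero {R σ : Type*} [CommRing R] {I : Ideal R}
    {P : MvPolynomial σ ℤ} (hP : constantCoeff P = 0) {x : σ → R} (hx : ∀ i, x i ∈ I) :
    aeval x P ∈ I := by
  rw [← Ideal.Quotient.eq_zero_iff_mem, ← Ideal.Quotient.mkₐ_eq_mk ℤ, comp_aeval_apply]
  have : (fun i => Ideal.Quotient.mkₐ ℤ I (x i)) = 0 := by
    ext i; exact Ideal.Quotient.eq_zero_iff_mem.2 (hx i)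
  rw [this, aeval_zero, hP, map_zero]

namespace WittVector

variable {p : ℕ} [hp : Fact p.Prime] {R S : Type*} [CommRing R] [CommRing S]

theorem constantCoeff_frobeniusPolyAux (n : ℕ) :
    MvPolynomial.constantCoeff (frobeniusPolyAux p n) = 0 := by
  -- over `ℤ`, `frobenius 0 = 0` says `p * c = 0` for the constant term `c`
  have h := coeff_frobenius (0 : WittVector p ℤ) n
  rw [map_zero, zero_coeff, show (0 : WittVector p ℤ).coeff = 0 from _root_.funext (zero_coeff p ℤ),
    MvPolynomial.aeval_zero, frobeniusPoly] at h
  simpa [hp.out.ne_zero] using h.symm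

theorem map_frobenius (f : R →+* S) (x : WittVector p R) :
    map f (frobenius x) = frobenius (map f x) := by
  ext n
  rw [map_coeff, coeff_frobenius, coeff_frobenius, ← f.toIntAlgHom_apply,
    MvPolynomial.comp_aeval_apply]
  rfl

theorem map_mk_eq_map_mk_iff {I : Ideal R} {x y : WittVector p R} :
    map (Ideal.Quotient.mk I) x = map (Ideal.Quotient.mk I) y ↔
      ∀ n, x.coeff n - y.coeff n ∈ I := by
  simp only [WittVector.ext_iff, map_coeff, Ideal.Quotient.mk_eq_mk_iff_sub_mem]

theorem coeff_frobenius_mem {I K : Ideal R} (hpow : ∀ a ∈ I, a ^ p ∈ K)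
    (hmul : ∀ a ∈ I, (p : R) * a ∈ K) {x : WittVector p R} (hx : ∀ n, x.coeff n ∈ I) (n : ℕ) :
    (frobenius x).coeff n ∈ K := by
  rw [coeff_frobenius, frobeniusPoly, map_add, map_mul, map_pow, MvPolynomial.aeval_X,
    MvPolynomial.aeval_C, algebraMap_int_eq, eq_intCast, Int.cast_natCast]
  exact K.add_mem (hpow _ (hx n)) (hmul _
    (MvPolynomial.aeval_mem_of_constantCoeff_eq_zero (constantCoeff_frobeniusPolyAux n) hx))

theorem coeff_frobenius_sub_mem {I K : Ideal R} (hpow : ∀ a ∈ I, a ^ p ∈ K)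
    (hmul : ∀ a ∈ I, (p : R) * a ∈ K) {x y : WittVector p R}
    (h : ∀ n, x.coeff n - y.coeff n ∈ I) (n : ℕ) :
    (frobenius x).coeff n - (frobenius y).coeff n ∈ K := by
  rw [← map_mk_eq_map_mk_iff, ← sub_eq_zero, ← map_sub, map_eq_zero_iff] at h
  revert n
  rw [← map_mk_eq_map_mk_iff, ← sub_eq_zero, ← map_sub, ← map_sub, map_eq_zero_iff]
  exact fun n => Ideal.Quotient.eq_zero_iff_mem.2 <|
    coeff_frobenius_mem hpow hmul (fun m => Ideal.Quotient.eq_zero_iff_mem.1 (h m)) n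

end WittVector

namespace TruncatedWittVector

variable {p : ℕ} {R S : Type*} [CommRing R] [CommRing S] {n : ℕ}

theorem coeff_out_sub_mem {I : Ideal R} {x y : TruncatedWittVector p n R}
    (h : ∀ i, x.coeff i - y.coeff i ∈ I) (m : ℕ) : x.out.coeff m - y.out.coeff m ∈ I := by
  by_cases hm : m < n
  · have := h ⟨m, hm⟩
    rwa [← coeff_out, ← coeff_out] at this
  · have hout : ∀ z : TruncatedWittVector p n R, z.out.coeff m = 0 := fun z => dif_neg hm
    rw [hout, hout, sub_zero]
    exact I.zero_mem

variable [Fact p.Prime]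

noncomputable def map (f : R →+* S) : TruncatedWittVector p n R →+* TruncatedWittVector p n S :=
  (WittVector.truncate n).liftOfSurjective (WittVector.truncate_surjective p n R)
    ⟨(WittVector.truncate n).comp (WittVector.map f), fun x hx => by
      rw [WittVector.mem_ker_truncate] at hx
      rw [RingHom.mem_ker, RingHom.comp_apply, ← RingHom.mem_ker, WittVector.mem_ker_truncate]
      intro i hi
      rw [WittVector.map_coeff, hx i hi, map_zero]⟩

theorem map_truncate (f : R →+* S) (x : WittVector p R) :
    map f (WittVector.truncate n x) = WittVector.truncate n (WittVector.map f x) :=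
  RingHom.liftOfRightInverse_comp_apply _ _ _ _ x

@[simp]
theorem coeff_map (f : R →+* S) (x : TruncatedWittVector p n R) (i : Fin n) :
    (map f x).coeff i = f (x.coeff i) := by
  obtain ⟨x, rfl⟩ := WittVector.truncate_surjective p n R x
  rw [map_truncate, WittVector.coeff_truncate, WittVector.coeff_truncate, WittVector.map_coeff]

theorem map_surjective {f : R →+* S} (hf : Function.Surjective f) :
    Function.Surjective (map (p := p) (n := n) f) := by
  intro y
  obtain ⟨y, rfl⟩ := WittVector.truncate_surjective p n S y
  obtain ⟨x, rfl⟩ := WittVector.map_surjective f hf y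
  exact ⟨WittVector.truncate n x, map_truncate f x⟩

theorem map_mk_span_singleton_eq_iff {a : R} {x y : TruncatedWittVector p n R} :
    map (Ideal.Quotient.mk (Ideal.span {a})) x = map (Ideal.Quotient.mk (Ideal.span {a})) y ↔
      ∀ i, a ∣ x.coeff i - y.coeff i := by
  simp only [TruncatedWittVector.ext_iff, coeff_map, Ideal.Quotient.mk_eq_mk_iff_sub_mem,
    Ideal.mem_span_singleton]

end TruncatedWittVector

section TruncatedFrobenius

variable {p : ℕ} [hp : Fact p.Prime] {R S : Type*} [CommRing R] [CommRing S]

def IsTruncatedFrobenius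
    (F : ∀ r : ℕ, TruncatedWittVector p (r + 1) R →+* TruncatedWittVector p r R) : Prop :=
  ∀ r, (F r).comp (WittVector.truncate (r + 1)) = (WittVector.truncate r).comp WittVector.frobenius

namespace IsTruncatedFrobenius

variable {F : ∀ r : ℕ, TruncatedWittVector p (r + 1) R →+* TruncatedWittVector p r R}
  (hF : IsTruncatedFrobenius F)
include hF

theorem apply_truncate (r : ℕ) (x : WittVector p R) :
    F r (WittVector.truncate (r + 1) x) = WittVector.truncate r (WittVector.frobenius x) :=
  RingHom.congr_fun (hF r) x

theorem coeff_sub_mem {I K : Ideal R} (hpow : ∀ a ∈ I, a ^ p ∈ K)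
    (hmul : ∀ a ∈ I, (p : R) * a ∈ K) {r : ℕ} {x y : TruncatedWittVector p (r + 1) R}
    (h : ∀ i, x.coeff i - y.coeff i ∈ I) (i : Fin r) :
    (F r x).coeff i - (F r y).coeff i ∈ K := by
  have hout : ∀ z : TruncatedWittVector p (r + 1) R, WittVector.truncate (r + 1) z.out = z :=
    TruncatedWittVector.truncateFun_out
  rw [← hout x, ← hout y, hF.apply_truncate, hF.apply_truncate, WittVector.coeff_truncate,
    WittVector.coeff_truncate]
  exact WittVector.coeff_frobenius_sub_mem hpow hmul (TruncatedWittVector.coeff_out_sub_mem h) i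

theorem coeff_sub_dvd {π : R} (hπ : π ∣ (p : R)) {k r : ℕ} {x y : TruncatedWittVector p (r + 1) R}
    (h : ∀ i, (p : R) * π ^ k ∣ x.coeff i - y.coeff i) (i : Fin r) :
    (p : R) * π ^ (k + 1) ∣ (F r x).coeff i - (F r y).coeff i := by
  simp only [← Ideal.mem_span_singleton] at h ⊢
  refine hF.coeff_sub_mem (fun a ha => ?_) (fun a ha => ?_) h i <;>
    rw [Ideal.mem_span_singleton] at ha ⊢
  exacts [mul_pow_succ_dvd_pow hπ hp.out.two_le ha, mul_pow_succ_dvd_mul hπ ha]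

theorem map_apply {G : ∀ r : ℕ, TruncatedWittVector p (r + 1) S →+* TruncatedWittVector p r S}
    (hG : IsTruncatedFrobenius G) (f : R →+* S) (r : ℕ) (x : TruncatedWittVector p (r + 1) R) :
    TruncatedWittVector.map f (F r x) = G r (TruncatedWittVector.map f x) := by
  obtain ⟨x, rfl⟩ := WittVector.truncate_surjective p (r + 1) R x
  rw [hF.apply_truncate, TruncatedWittVector.map_truncate, TruncatedWittVector.map_truncate,
    hG.apply_truncate, WittVector.map_frobenius]

theorem coeff_of_charP [CharP R p] (r : ℕ) (x : TruncatedWittVector p (r + 1) R) (i : Fin r) :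
    (F r x).coeff i = x.coeff i.castSucc ^ p := by
  obtain ⟨x, rfl⟩ := WittVector.truncate_surjective p (r + 1) R x
  rw [hF.apply_truncate, WittVector.coeff_truncate, WittVector.coeff_frobenius_charP,
    WittVector.coeff_truncate]
  rfl

end IsTruncatedFrobenius

theorem exists_isTruncatedFrobenius_of_charP [CharP S p] :
    ∃ G : ∀ r : ℕ, TruncatedWittVector p (r + 1) S →+* TruncatedWittVector p r S,
      IsTruncatedFrobenius G :=
  ⟨fun r => (TruncatedWittVector.truncate r.le_succ).comp
      (TruncatedWittVector.map (frobenius S p)),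
    fun r => RingHom.ext fun x => by
      simp [TruncatedWittVector.map_truncate, WittVector.frobenius_eq_map_frobenius]⟩

end TruncatedFrobenius

section FrobeniusLimit

variable {p : ℕ} {R : Type*} [CommRing R] {π : R}

def CoeffModEq (a : R) (Y Y' : ∀ r, TruncatedWittVector p r R) : Prop :=
  ∀ r (i : Fin r), a ∣ (Y r).coeff i - (Y' r).coeff i

namespace CoeffModEq

variable {a b : R} {Y Y' Y'' : ∀ r, TruncatedWittVector p r R}

theorem symm (h : CoeffModEq a Y Y') : CoeffModEq a Y' Y :=
  fun r i => dvd_sub_comm.1 (h r i)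

theorem trans (h : CoeffModEq a Y Y') (h' : CoeffModEq a Y' Y'') : CoeffModEq a Y Y'' :=
  fun r i => by simpa using dvd_add (h r i) (h' r i)

theorem of_dvd (hab : a ∣ b) (h : CoeffModEq b Y Y') : CoeffModEq a Y Y' :=
  fun r i => hab.trans (h r i)

end CoeffModEq

theorem eq_of_forall_coeffModEq (hH : IsHausdorff (Ideal.span {π}) R) (a : R)
    {Y Y' : ∀ r, TruncatedWittVector p r R} (h : ∀ k, CoeffModEq (a * π ^ k) Y Y') : Y = Y' :=
  funext fun r => TruncatedWittVector.ext fun i =>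
    hH.eq_of_forall_pow_dvd_sub fun k => (dvd_mul_left _ a).trans (h k r i)

theorem exists_forall_coeffModEq (hC : IsAdicComplete (Ideal.span {π}) R) (a : R)
    {t : ℕ → ∀ r, TruncatedWittVector p r R} (ht : ∀ k, CoeffModEq (a * π ^ k) (t (k + 1)) (t k)) :
    ∃ Y, ∀ k, CoeffModEq (a * π ^ k) Y (t k) := by
  have : ∀ r (i : Fin r), ∃ L, ∀ k, a * π ^ k ∣ L - (t k r).coeff i := fun r i =>
    hC.exists_mul_pow_dvd_sub a fun k => ht k r i
  choose L hL using this
  exact ⟨fun r => TruncatedWittVector.mk p (L r), fun k r i => by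
    rw [TruncatedWittVector.coeff_mk]; exact hL r i k⟩

variable [Fact p.Prime]

theorem coeffModEq_iff_map_mk {a : R} {Y Y' : ∀ r, TruncatedWittVector p r R} :
    CoeffModEq a Y Y' ↔ ∀ r, TruncatedWittVector.map (Ideal.Quotient.mk (Ideal.span {a})) (Y r) =
      TruncatedWittVector.map (Ideal.Quotient.mk (Ideal.span {a})) (Y' r) :=
  forall_congr' fun _ => TruncatedWittVector.map_mk_span_singleton_eq_iff.symm

noncomputable def frobeniusShift
    (F : ∀ r : ℕ, TruncatedWittVector p (r + 1) R →+* TruncatedWittVector p r R)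
    (Y : ∀ r, TruncatedWittVector p r R) : ∀ r, TruncatedWittVector p r R :=
  fun r => F r (Y (r + 1))

variable {F : ∀ r : ℕ, TruncatedWittVector p (r + 1) R →+* TruncatedWittVector p r R}

theorem mem_wittFrobeniusLimit_iff {Y : ∀ r, TruncatedWittVector p r R} :
    Y ∈ wittFrobeniusLimit p R F ↔ frobeniusShift F Y = Y :=
  funext_iff.symm

theorem CoeffModEq.frobeniusShift (hF : IsTruncatedFrobenius F) (hπ : π ∣ (p : R)) {k : ℕ}
    {Y Y' : ∀ r, TruncatedWittVector p r R} (h : CoeffModEq ((p : R) * π ^ k) Y Y') :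
    CoeffModEq ((p : R) * π ^ (k + 1)) (frobeniusShift F Y) (frobeniusShift F Y') :=
  fun r => hF.coeff_sub_dvd hπ (h (r + 1))

theorem eq_of_frobeniusShift_eq_of_coeffModEq (hF : IsTruncatedFrobenius F) (hπ : π ∣ (p : R))
    (hH : IsHausdorff (Ideal.span {π}) R) {Y Y' : ∀ r, TruncatedWittVector p r R}
    (hY : frobeniusShift F Y = Y) (hY' : frobeniusShift F Y' = Y') (h : CoeffModEq (p : R) Y Y') :
    Y = Y' := by
  refine eq_of_forall_coeffModEq hH (p : R) fun k => ?_
  induction k with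
  | zero => simpa using h
  | succ k ih => rw [← hY, ← hY']; exact ih.frobeniusShift hF hπ

theorem exists_frobeniusShift_eq_of_coeffModEq (hF : IsTruncatedFrobenius F) (hπ : π ∣ (p : R))
    (hC : IsAdicComplete (Ideal.span {π}) R) {z : ∀ r, TruncatedWittVector p r R}
    (hz : CoeffModEq (p : R) (frobeniusShift F z) z) :
    ∃ Y, frobeniusShift F Y = Y ∧ CoeffModEq (p : R) Y z := by
  let t : ℕ → ∀ r, TruncatedWittVector p r R := fun k => (frobeniusShift F)^[k] z
  have ht_succ : ∀ k, t (k + 1) = frobeniusShift F (t k) := fun k =>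
    Function.iterate_succ_apply' _ k z
  have ht : ∀ k, CoeffModEq ((p : R) * π ^ k) (t (k + 1)) (t k) := by
    intro k
    induction k with
    | zero => rw [ht_succ, pow_zero, mul_one]; exact hz
    | succ k ih =>
      have := ih.frobeniusShift hF hπ
      rwa [← ht_succ, ← ht_succ] at this
  obtain ⟨Y, hY⟩ := exists_forall_coeffModEq hC (p : R) ht
  refine ⟨Y, eq_of_forall_coeffModEq hC.toIsHausdorff (p : R) fun k => ?_, by simpa [t] using hY 0⟩
  have hshift := (hY k).frobeniusShift hF hπ
  rw [← ht_succ] at hshift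
  exact (hshift.trans (hY (k + 1)).symm).of_dvd (mul_dvd_mul_left _ (pow_dvd_pow π k.le_succ))

end FrobeniusLimit

section Tilt

variable {p : ℕ} [Fact p.Prime] {S : Type*} [CommRing S] [CharP S p]
  {G : ∀ r : ℕ, TruncatedWittVector p (r + 1) S →+* TruncatedWittVector p r S}

noncomputable def tiltToWittFrobeniusLimit (hG : IsTruncatedFrobenius G) :
    WittVector p (Perfection S p) →+* wittFrobeniusLimit p S G :=
  RingHom.codRestrict
    (RingHom.pi fun r => (WittVector.truncate r).comp (WittVector.map (Perfection.coeff S p r))) _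
    fun x r => TruncatedWittVector.ext fun i => by
      simp only [RingHom.pi_apply, RingHom.comp_apply, hG.coeff_of_charP,
        WittVector.coeff_truncate, WittVector.map_coeff]
      exact Perfection.coeff_pow_p' _ _

theorem coeff_tiltToWittFrobeniusLimit (hG : IsTruncatedFrobenius G)
    (x : WittVector p (Perfection S p)) (r : ℕ) (i : Fin r) :
    ((tiltToWittFrobeniusLimit hG x : ∀ r, TruncatedWittVector p r S) r).coeff i =
      Perfection.coeff S p r (x.coeff i) :=
  (WittVector.coeff_truncate (WittVector.map (Perfection.coeff S p r) x) i).trans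
    (WittVector.map_coeff _ _ _)

theorem tiltToWittFrobeniusLimit_injective (hG : IsTruncatedFrobenius G) :
    Function.Injective (tiltToWittFrobeniusLimit hG) := by
  intro x y hxy
  ext i n
  have h := congrArg
    (fun Y : wittFrobeniusLimit p S G =>
      ((Y : ∀ r, TruncatedWittVector p r S) (n + (i + 1))).coeff ⟨i, by omega⟩) hxy
  simp only [coeff_tiltToWittFrobeniusLimit] at h
  have hx := Perfection.coeffMonoidHom_pow_p_pow' (x.coeff i) n (i + 1)
  have hy := Perfection.coeffMonoidHom_pow_p_pow' (y.coeff i) n (i + 1)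
  simp only [Perfection.coeffMonoidHom_eq_coeff] at hx hy
  rw [← hx, ← hy, h]

theorem tiltToWittFrobeniusLimit_surjective (hG : IsTruncatedFrobenius G) :
    Function.Surjective (tiltToWittFrobeniusLimit hG) := by
  rintro ⟨Y, hY⟩
  have hYpow : ∀ r (i : Fin r), (Y (r + 1)).coeff i.castSucc ^ p = (Y r).coeff i := fun r i => by
    rw [← hG.coeff_of_charP (R := S) r (Y (r + 1)) i]
    exact congrArg (TruncatedWittVector.coeff i) (hY r)
  -- the `i`-th coefficients of `Y` form a compatible system of `p`-th roots starting at
  -- `r = i + 1`; raising it to the power `p ^ (i + 1)` re-indexes it to start at `r = 0`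
  let b : ℕ → Perfection S p := fun i =>
    ⟨fun n => (Y (i + n + 1)).coeff ⟨i, by omega⟩, fun n => hYpow (i + n + 1) ⟨i, by omega⟩⟩
  refine ⟨WittVector.mk p fun i => b i ^ p ^ (i + 1),
    Subtype.ext <| funext fun r => TruncatedWittVector.ext fun ⟨i, hi⟩ => ?_⟩
  obtain ⟨m, rfl⟩ := Nat.exists_eq_add_of_lt hi
  have h := Perfection.coeffMonoidHom_pow_p_pow (b i) m (i + 1)
  rw [show m + (i + 1) = i + m + 1 by omega] at h
  rw [coeff_tiltToWittFrobeniusLimit, WittVector.coeff_mk]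
  exact h

theorem tiltToWittFrobeniusLimit_bijective (hG : IsTruncatedFrobenius G) :
    Function.Bijective (tiltToWittFrobeniusLimit hG) :=
  ⟨tiltToWittFrobeniusLimit_injective hG, tiltToWittFrobeniusLimit_surjective hG⟩

end Tilt

section Reduction

variable {p : ℕ} [Fact p.Prime] {R S : Type*} [CommRing R] [CommRing S]
  {F : ∀ r : ℕ, TruncatedWittVector p (r + 1) R →+* TruncatedWittVector p r R}
  {G : ∀ r : ℕ, TruncatedWittVector p (r + 1) S →+* TruncatedWittVector p r S}

noncomputable def wittFrobeniusLimitMap (f : R →+* S) (hF : IsTruncatedFrobenius F)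
    (hG : IsTruncatedFrobenius G) : wittFrobeniusLimit p R F →+* wittFrobeniusLimit p S G :=
  RingHom.codRestrict
    ((RingHom.pi fun r => (TruncatedWittVector.map f).comp (Pi.evalRingHom _ r)).comp
      (wittFrobeniusLimit p R F).subtype) _
    fun Y r => by
      change G r (TruncatedWittVector.map f (Y.1 (r + 1))) = TruncatedWittVector.map f (Y.1 r)
      rw [← hF.map_apply hG, Y.2 r]

theorem wittFrobeniusLimitMap_apply (f : R →+* S) (hF : IsTruncatedFrobenius F)
    (hG : IsTruncatedFrobenius G) (Y : wittFrobeniusLimit p R F) (r : ℕ) :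
    (wittFrobeniusLimitMap f hF hG Y : ∀ r, TruncatedWittVector p r S) r =
      TruncatedWittVector.map f ((Y : ∀ r, TruncatedWittVector p r R) r) :=
  rfl

theorem wittFrobeniusLimitMap_mk_bijective {π : R} (hπ : π ∣ (p : R))
    (hC : IsAdicComplete (Ideal.span {π}) R) (hF : IsTruncatedFrobenius F)
    {G : ∀ r : ℕ, TruncatedWittVector p (r + 1) (R ⧸ Ideal.span {(p : R)}) →+*
      TruncatedWittVector p r (R ⧸ Ideal.span {(p : R)})}
    (hG : IsTruncatedFrobenius G) :
    Function.Bijective (wittFrobeniusLimitMap (Ideal.Quotient.mk _) hF hG) := by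
  constructor
  · rintro ⟨Y, hY⟩ ⟨Y', hY'⟩ h
    refine Subtype.ext <| eq_of_frobeniusShift_eq_of_coeffModEq hF hπ hC.toIsHausdorff
      (mem_wittFrobeniusLimit_iff.1 hY) (mem_wittFrobeniusLimit_iff.1 hY')
      (coeffModEq_iff_map_mk.2 fun r => ?_)
    exact congrFun (congrArg Subtype.val h) r
  · rintro ⟨Yb, hYb⟩
    choose z hz using fun r => TruncatedWittVector.map_surjective
      (p := p) (n := r) Ideal.Quotient.mk_surjective (Yb r)
    have hshift : CoeffModEq (p : R) (frobeniusShift F z) z :=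
      coeffModEq_iff_map_mk.2 fun r => by
        rw [frobeniusShift, hF.map_apply hG, hz, hz]
        exact hYb r
    obtain ⟨Y, hY, hYz⟩ := exists_frobeniusShift_eq_of_coeffModEq hF hπ hC hshift
    refine ⟨⟨Y, mem_wittFrobeniusLimit_iff.2 hY⟩, Subtype.ext <| funext fun r => ?_⟩
    rw [wittFrobeniusLimitMap_apply, coeffModEq_iff_map_mk.1 hYz r, hz]

end Reduction

theorem witt_limit_frobenius_iso_ainf_general
    (p : ℕ) [Fact p.Prime] (R : Type*) [CommRing R]
    [CharP (R ⧸ Ideal.span {(p : R)}) p]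
    -- `R` is perfectoid:
    (π : R) (hcomplete : IsAdicComplete (Ideal.span {π}) R)
    (hdvd : π ^ p ∣ (p : R))
    -- the Witt vector Frobenius maps `W_{r+1}(R) → W_r(R)`:
    (F : ∀ r : ℕ, TruncatedWittVector p (r + 1) R →+* TruncatedWittVector p r R)
    (hF : ∀ r : ℕ, (F r).comp (WittVector.truncate (r + 1)) =
      (WittVector.truncate r).comp WittVector.frobenius) :
    Nonempty (WittVector p (Perfection (R ⧸ Ideal.span {(p : R)}) p) ≃+*
      wittFrobeniusLimit p R F) := by
  obtain ⟨G, hG⟩ := exists_isTruncatedFrobenius_of_charP (p := p) (S := R ⧸ Ideal.span {(p : R)})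
  have hπ : π ∣ (p : R) := (dvd_pow_self π (Fact.out : p.Prime).ne_zero).trans hdvd
  exact ⟨(RingEquiv.ofBijective _ (tiltToWittFrobeniusLimit_bijective hG)).trans
    (RingEquiv.ofBijective _ (wittFrobeniusLimitMap_mk_bijective hπ hcomplete hF hG)).symm⟩

/-- For a perfectoid ring `R₀`, the inverse limit of the truncated Witt vector
rings `W_r(R₀)` along the Witt vector Frobenius maps `F : W_{r+1}(R₀) → W_r(R₀)` is isomorphic
to `A_inf(R₀) := W(R₀^♭)`, the Witt vectors of the tilt of `R₀`. -/
theorem witt_limit_frobenius_iso_ainf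
    (p : ℕ) [Fact p.Prime] (R : Type*) [CommRing R]
    [CharP (R ⧸ Ideal.span {(p : R)}) p]
    -- `R` is perfectoid:
    (π : R) (hcomplete : IsAdicComplete (Ideal.span {π}) R)
    (hdvd : π ^ p ∣ (p : R))
    (hfrob : Function.Surjective (frobenius (R ⧸ Ideal.span {(p : R)}) p))
    (θ : WittVector p (Perfection (R ⧸ Ideal.span {(p : R)}) p) →+* R)
    (hθsurj : Function.Surjective θ) (hθker : (RingHom.ker θ).IsPrincipal)
    -- the Witt vector Frobenius maps `W_{r+1}(R) → W_r(R)`: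
    (F : ∀ r : ℕ, TruncatedWittVector p (r + 1) R →+* TruncatedWittVector p r R)
    (hF : ∀ r : ℕ, (F r).comp (WittVector.truncate (r + 1)) =
      (WittVector.truncate r).comp WittVector.frobenius) :
    Nonempty (WittVector p (Perfection (R ⧸ Ideal.span {(p : R)}) p) ≃+*
      wittFrobeniusLimit p R F) :=
  witt_limit_frobenius_iso_ainf_general p R π hcomplete hdvd F hF
end

section
/- Let A be a commutative ring, ξ ∈ A a non-zero-divisor, and consider the graded A-algebra map A[u,v]/(uv − ξ) → A[σ, σ^{-1}] determined by u ↦ ξσ and v ↦ σ^{-1} (deg u = 2 = deg σ, deg v = −2). This map is a well-defined injective graded ring homomorphism whose image in degree 2i is ξ^{max(i,0)}·A·σ^i. -/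
/-!
As an `A`-module, `A[u,v]/(uv - ξ)` is spanned by the monomials `eᵢ`, equal to `u^i` for
`i ≥ 0` and to `v^{-i}` for `i < 0`, since `u^a v^b = ξ^{min a b} u^{a-b} v^{b-a}`. Their images
`ξ^{max(i,0)} σ^i` sit in pairwise distinct degrees, so the coefficient of `σ^i` in the image of
`∑ cᵢ eᵢ` is `cᵢ ξ^{max(i,0)}`. As `ξ` is a non-zero-divisor this determines every `cᵢ`, which
gives injectivity, and it describes the image in each degree.
-/

theorem LaurentPolynomial.coeff_C_mul_T_self {R : Type*} [Semiring R] (b : R) (j : ℤ) :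
    (C b * T j : LaurentPolynomial R).coeff j = b := by
  rw [← single_eq_C_mul_T, AddMonoidAlgebra.coeff_single, Finsupp.single_eq_same]

open MvPolynomial

abbrev UVQuotient {A : Type*} [CommRing A] (ξ : A) :=
  MvPolynomial (Fin 2) A ⧸ Ideal.span {(X 0 : MvPolynomial (Fin 2) A) * X 1 - C ξ}

namespace UVQuotient

variable {A : Type*} [CommRing A] (ξ : A)

/-- `rw [Algebra.smul_def]` fails on this quotient: its `A`-action comes from
`Submodule.Quotient` and is only definitionally equal to the algebra's. -/
theorem smul_eq_algebraMap_mul (a : A) (x : UVQuotient ξ) :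
    a • x = algebraMap A (UVQuotient ξ) a * x :=
  Algebra.smul_def a x

theorem mk_X_mul_X : Ideal.Quotient.mk _ (X 0 * X 1) = algebraMap A (UVQuotient ξ) ξ :=
  Ideal.Quotient.eq.mpr (Ideal.subset_span rfl)

theorem mk_X_pow_mul_X_pow (a b k : ℕ) :
    Ideal.Quotient.mk _ (X 0 ^ (a + k) * X 1 ^ (b + k)) =
      ξ ^ k • (Ideal.Quotient.mk _ (X 0 ^ a * X 1 ^ b) : UVQuotient ξ) := by
  rw [show (X 0 ^ (a + k) * X 1 ^ (b + k) : MvPolynomial (Fin 2) A) =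
      (X 0 * X 1) ^ k * (X 0 ^ a * X 1 ^ b) by ring, map_mul, map_pow, mk_X_mul_X, ← map_pow]
  exact (smul_eq_algebraMap_mul ξ _ _).symm

/-- Since `Int.toNat` truncates at `0`, this is `u ^ i` for `i ≥ 0` and `v ^ (-i)` for `i ≤ 0`. -/
noncomputable def stdMonomial (i : ℤ) : UVQuotient ξ :=
  Ideal.Quotient.mk _ (X 0 ^ i.toNat * X 1 ^ (-i).toNat)

theorem mk_monomial (s : Fin 2 →₀ ℕ) (c : A) :
    Ideal.Quotient.mk _ (monomial s c) =
      (c * ξ ^ min (s 0) (s 1)) • stdMonomial ξ ((s 0 : ℤ) - s 1) := by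
  have key := mk_X_pow_mul_X_pow ξ ((s 0 - s 1 : ℤ).toNat) ((-(s 0 - s 1 : ℤ)).toNat)
    (min (s 0) (s 1))
  rw [show (s 0 - s 1 : ℤ).toNat + min (s 0) (s 1) = s 0 by omega,
    show (-(s 0 - s 1 : ℤ)).toNat + min (s 0) (s 1) = s 1 by omega] at key
  rw [monomial_eq, Finsupp.prod_fintype _ _ (fun i => pow_zero _), Fin.prod_univ_two, map_mul, key,
    mul_smul, stdMonomial]
  exact (smul_eq_algebraMap_mul ξ _ _).symm

theorem span_stdMonomial : Submodule.span A (Set.range (stdMonomial ξ)) = ⊤ := by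
  refine Submodule.eq_top_iff'.mpr fun x => ?_
  obtain ⟨p, rfl⟩ := Ideal.Quotient.mk_surjective x
  rw [p.as_sum, map_sum]
  exact Submodule.sum_mem _ fun s _ =>
    mk_monomial ξ s _ ▸ Submodule.smul_mem _ _ (Submodule.subset_span ⟨_, rfl⟩)

theorem linearCombination_stdMonomial_surjective :
    Function.Surjective (Finsupp.linearCombination A (stdMonomial ξ)) := by
  rw [← LinearMap.range_eq_top, Finsupp.range_linearCombination, span_stdMonomial]

section LaurentMap

variable {ξ} (g : UVQuotient ξ →+* LaurentPolynomial A)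
  (hgu : g (Ideal.Quotient.mk _ (X 0)) = LaurentPolynomial.C ξ * LaurentPolynomial.T 1)
  (hgv : g (Ideal.Quotient.mk _ (X 1)) = LaurentPolynomial.T (-1))
  (hgC : ∀ a : A, g (Ideal.Quotient.mk _ (C a)) = LaurentPolynomial.C a)
include hgu hgv

theorem map_stdMonomial (i : ℤ) :
    g (stdMonomial ξ i) = LaurentPolynomial.C (ξ ^ i.toNat) * LaurentPolynomial.T i := by
  rw [stdMonomial, map_mul, map_pow, map_pow, map_mul, map_pow, map_pow, hgu, hgv, mul_pow,
    LaurentPolynomial.T_pow, LaurentPolynomial.T_pow, map_pow, mul_assoc,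
    ← LaurentPolynomial.T_add]
  congr 2
  omega

include hgC

theorem map_smul_stdMonomial (a : A) (i : ℤ) :
    g (a • stdMonomial ξ i) = LaurentPolynomial.C (a * ξ ^ i.toNat) * LaurentPolynomial.T i := by
  rw [smul_eq_algebraMap_mul, map_mul, map_stdMonomial g hgu hgv, ← mul_assoc,
    map_mul LaurentPolynomial.C]
  exact congrArg (· * _ * _) (hgC a)

theorem coeff_map_linearCombination (c : ℤ →₀ A) (j : ℤ) :
    (g (Finsupp.linearCombination A (stdMonomial ξ) c)).coeff j = c j * ξ ^ j.toNat := by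
  simp only [Finsupp.linearCombination_apply, map_finsuppSum,
    map_smul_stdMonomial g hgu hgv hgC, ← LaurentPolynomial.single_eq_C_mul_T,
    AddMonoidAlgebra.coeff_finsuppSum, AddMonoidAlgebra.coeff_single, Finsupp.sum_apply,
    Finsupp.single_apply]
  simp +contextual

end LaurentMap

end UVQuotient

/-- Let `A` be a commutative ring and `ξ` a non-zero-divisor. The graded
`A`-algebra map `A[u,v]/(uv − ξ) → A[σ,σ⁻¹]` determined by `u ↦ ξσ`, `v ↦ σ⁻¹` is a
well-defined injective graded ring homomorphism, whose image in degree `2i` is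
`ξ^{max(i,0)}·A·σ^i`. -/
theorem map_to_laurent_injective_image
    {A : Type*} [CommRing A] (ξ : A) (hξ : ξ ∈ nonZeroDivisors A)
    (g : (MvPolynomial (Fin 2) A ⧸
        Ideal.span {(X 0 : MvPolynomial (Fin 2) A) * X 1 - C ξ}) →+*
      LaurentPolynomial A)
    (hgu : g (Ideal.Quotient.mk _ (X 0 : MvPolynomial (Fin 2) A)) =
      LaurentPolynomial.C ξ * LaurentPolynomial.T 1)
    (hgv : g (Ideal.Quotient.mk _ (X 1 : MvPolynomial (Fin 2) A)) =
      LaurentPolynomial.T (-1))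
    (hgC : ∀ a : A, g (Ideal.Quotient.mk _ (C a : MvPolynomial (Fin 2) A)) =
      LaurentPolynomial.C a) :
    Function.Injective g ∧
      ∀ (i : ℤ) (a : A),
        (LaurentPolynomial.C a * LaurentPolynomial.T i ∈ Set.range g ↔
          a ∈ Ideal.span {ξ ^ i.toNat}) := by
  have hcoeff := UVQuotient.coeff_map_linearCombination g hgu hgv hgC
  have surj := UVQuotient.linearCombination_stdMonomial_surjective ξ
  refine ⟨(injective_iff_map_eq_zero g).mpr fun x hx => ?_, fun i a => ⟨?_, ?_⟩⟩
  · obtain ⟨c, rfl⟩ := surj x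
    suffices c = 0 by rw [this, map_zero]
    ext j
    have hj := hcoeff c j
    rw [hx] at hj
    exact (mul_right_mem_nonZeroDivisors_eq_zero_iff (pow_mem hξ _)).mp hj.symm
  · rintro ⟨x, hx⟩
    obtain ⟨c, rfl⟩ := surj x
    have hi := hcoeff c i
    rw [hx, LaurentPolynomial.coeff_C_mul_T_self] at hi
    exact Ideal.mem_span_singleton'.mpr ⟨c i, hi.symm⟩
  · intro ha
    obtain ⟨b, rfl⟩ := Ideal.mem_span_singleton'.mp ha
    exact ⟨b • UVQuotient.stdMonomial ξ i, UVQuotient.map_smul_stdMonomial g hgu hgv hgC b i⟩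
end
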